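/- arXiv:1111.1295 — 2 statements merged into one kernel-verified Lean document; each statement's English description precedes it below -/
import Mathlib

section
/- (Rawnsley; exactness of the d̆-sequence) Fix n and for 0 ≤ q ≤ n write H_{n−q,q} for the corresponding subspace of H^{⊗n}. The sequence 0 → H^{⊙n} = H_{n,0} →^{d̆_0} H_{n−1,1} →^{d̆_1} ⋯ →^{d̆_{n−1}} H_{0,n} = H^{∧n} → 0 is exact: d̆_0 is injective, d̆_{n−1} is surjective, and for every 1 ≤ q ≤ n−1, ker(d̆_q : H_{n−q,q} → H_{n−q−1,q+1}) = im(d̆_{q−1} : H_{n−q+1,q−1} → H_{n−q,q}). -/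
open scoped BigOperators

noncomputable section

variable (F : Type*) [Field F] [CharZero F] (H : Type*) [AddCommGroup H] [Module F H]

/-- The `n`-th tensor power of `H` over `F`. -/
abbrev TP (n : ℕ) : Type _ := PiTensorProduct F (fun _ : Fin n => H)

/-- The action of a permutation `σ ∈ S_n` on the `n`-th tensor power,
permuting the tensor factors. -/
def permMap (n : ℕ) (σ : Equiv.Perm (Fin n)) : TP F H n →ₗ[F] TP F H n :=
  (PiTensorProduct.reindex F (fun _ : Fin n => H) σ).toLinearMap

/-- Identification of tensor powers of equal degrees. -/
def tpCast {m m' : ℕ} (hm : m = m') : TP F H m →ₗ[F] TP F H m' :=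
  (PiTensorProduct.reindex F (fun _ : Fin m => H) (finCongr hm)).toLinearMap

/-- The permutations of `{1, …, n}` moving only positions in `a`. -/
def permsOn (n : ℕ) (a : Finset (Fin n)) : Finset (Equiv.Perm (Fin n)) :=
  Finset.univ.filter fun σ => ∀ i, i ∉ a → σ i = i

/-- `S_a`: symmetrisation over the positions in `a` (the average over all
permutations of the positions in `a`, fixing the other positions). -/
def symOn (n : ℕ) (a : Finset (Fin n)) : TP F H n →ₗ[F] TP F H n :=
  (a.card.factorial : F)⁻¹ • ∑ σ ∈ permsOn n a, permMap F H n σ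

/-- `A_a`: skew-symmetrisation over the positions in `a` (the signed average over
all permutations of the positions in `a`, fixing the other positions). -/
def altOn (n : ℕ) (a : Finset (Fin n)) : TP F H n →ₗ[F] TP F H n :=
  (a.card.factorial : F)⁻¹ • ∑ σ ∈ permsOn n a, (Equiv.Perm.sign σ : ℤ) • permMap F H n σ

/-- The first `k` positions of `{1, …, n}`. -/
def firstSet (n k : ℕ) : Finset (Fin n) := Finset.univ.filter fun i => (i : ℕ) < k

/-- The last `m` positions of `{1, …, n}`. -/
def lastSet (n m : ℕ) : Finset (Fin n) := Finset.univ.filter fun i => n - m ≤ (i : ℕ)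

/-- `H^{⊙a,∧aᶜ}`: the image of `S_a ∘ A_{aᶜ}`, the subspace of `n`-tensors symmetric in
the positions of `a` and skew-symmetric in the positions of `aᶜ`. -/
def Hgen (n : ℕ) (a : Finset (Fin n)) : Submodule F (TP F H n) :=
  LinearMap.range (symOn F H n a ∘ₗ altOn F H n aᶜ)

/-- `H_{k,n-k} = H^{⊙k} ⊗ H^{∧(n-k)}`: the subspace of `n`-tensors symmetric in the
first `k` positions and skew-symmetric in the remaining positions. -/
def Hmix (n k : ℕ) : Submodule F (TP F H n) := Hgen F H n (firstSet n k)

/-- `H^{⊙[k],∧[n-k]}`: the span of the subspaces `H^{⊙a,∧aᶜ}` over all `k`-element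
subsets `a ⊆ {1, …, n}`. -/
def HmixSpan (n k : ℕ) : Submodule F (TP F H n) :=
  ⨆ a ∈ {a : Finset (Fin n) | a.card = k}, Hgen F H n a

/-- The global operator whose restriction to `H_{k,q}` (with `m = q + 1`, `n = k + q`)
is `d̆_q`: skew-symmetrisation of the last `m` positions, scaled by `m`. -/
def dOp (n m : ℕ) : TP F H n →ₗ[F] TP F H n := (m : F) • altOn F H n (lastSet n m)

/-- The global operator whose restriction to `H_{k-1,q+1}` (with `m = k`, `n = k + q`)
is `d̆*_q`: symmetrisation of the first `m` positions, scaled by `m`. -/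
def dStarOp (n m : ℕ) : TP F H n →ₗ[F] TP F H n := (m : F) • symOn F H n (firstSet n m)

/-- The elementary element `h₁⊙…⊙h_k ⊗ x₁∧…∧x_q` of `H_{k,q} ⊆ H^{⊗(k+q)}`. -/
def elem (k q : ℕ) (h : Fin k → H) (x : Fin q → H) : TP F H (k + q) :=
  ∑ ρ : Equiv.Perm (Fin k), ∑ τ : Equiv.Perm (Fin q),
    (Equiv.Perm.sign τ : ℤ) •
      (PiTensorProduct.tprod F (Fin.append (h ∘ ρ) (x ∘ τ)) : TP F H (k + q))

/-! `d̆*` (symmetrising one more slot) is a contracting homotopy for `d̆`: on `H_{k,q}` one has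
`d̆* d̆ + d̆ d̆* = n`. Peeling one slot off each average (`S_{m+1} = ⋃ᵢ (p i) S_m`) turns both
composites into `k` resp. `q` copies of the identity plus the same sum of transpositions between
the symmetric and the skew block, with opposite signs, so the cross terms cancel. Together with
`d̆ d̆ = 0` (skew-symmetrising two symmetric slots gives zero) and `n ≠ 0` in characteristic zero
this yields exactness everywhere, the two ends being the cases `q = 0` and `k = 0`. -/

/-- `symOn` and `altOn` are the cases `ε = 1` and `ε = sign`. -/
def avgOn (n : ℕ) (ε : Equiv.Perm (Fin n) →* ℤˣ) (a : Finset (Fin n)) :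
    TP F H n →ₗ[F] TP F H n :=
  (a.card.factorial : F)⁻¹ • ∑ σ ∈ permsOn n a, (ε σ : ℤ) • permMap F H n σ

variable {F H}

open Finset

lemma units_zsmul_zsmul_self {M : Type*} [AddCommGroup M] (u : ℤˣ) (x : M) :
    (u : ℤ) • (u : ℤ) • x = x := by
  rw [smul_smul, Int.units_coe_mul_self, one_smul]

section Perms

variable {n : ℕ} {a b : Finset (Fin n)} {σ τ : Equiv.Perm (Fin n)}

lemma mem_permsOn : σ ∈ permsOn n a ↔ ∀ i ∉ a, σ i = i := by
  simp [permsOn]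

lemma permsOn_mono (hab : a ⊆ b) : permsOn n a ⊆ permsOn n b := fun _ hσ =>
  mem_permsOn.2 fun i hi => mem_permsOn.1 hσ i fun h => hi (hab h)

lemma mul_mem_permsOn (hσ : σ ∈ permsOn n a) (hτ : τ ∈ permsOn n a) :
    σ * τ ∈ permsOn n a :=
  mem_permsOn.2 fun i hi => by
    rw [Equiv.Perm.mul_apply, mem_permsOn.1 hτ i hi, mem_permsOn.1 hσ i hi]

lemma inv_mem_permsOn (hσ : σ ∈ permsOn n a) : σ⁻¹ ∈ permsOn n a :=
  mem_permsOn.2 fun i hi => by rw [Equiv.Perm.inv_eq_iff_eq, mem_permsOn.1 hσ i hi]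

lemma swap_mem_permsOn {i j : Fin n} (hi : i ∈ a) (hj : j ∈ a) :
    Equiv.swap i j ∈ permsOn n a :=
  mem_permsOn.2 fun _ hx =>
    Equiv.swap_apply_of_ne_of_ne (fun h => hx (h ▸ hi)) (fun h => hx (h ▸ hj))

lemma apply_mem_iff_of_mem_permsOn (hσ : σ ∈ permsOn n a) {i : Fin n} : σ i ∈ a ↔ i ∈ a := by
  refine ⟨fun h => ?_, fun h => ?_⟩ <;> by_contra hi
  · exact hi (mem_permsOn.1 hσ i hi ▸ h)
  · rw [σ.injective (mem_permsOn.1 hσ _ hi)] at hi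
    exact hi h

lemma eq_one_of_mem_permsOn (ha : #a ≤ 1) (hσ : σ ∈ permsOn n a) : σ = 1 := by
  ext i
  by_cases hi : i ∈ a
  · exact congrArg Fin.val
      (card_le_one.1 ha _ ((apply_mem_iff_of_mem_permsOn hσ).2 hi) _ hi)
  · exact congrArg Fin.val (mem_permsOn.1 hσ i hi)

lemma card_permsOn : #(permsOn n a) = (#a).factorial := by
  rw [← Fintype.card_coe a, ← Fintype.card_perm,
    Fintype.card_congr (Equiv.Perm.subtypeEquivSubtypePerm (· ∈ a)), Fintype.card_subtype]
  rfl

lemma commute_of_mem_permsOn (hd : Disjoint a b) (hσ : σ ∈ permsOn n a)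
    (hτ : τ ∈ permsOn n b) : Commute σ τ :=
  Equiv.Perm.Disjoint.commute fun i => by
    by_cases hi : i ∈ a
    · exact Or.inr (mem_permsOn.1 hτ i (disjoint_left.1 hd hi))
    · exact Or.inl (mem_permsOn.1 hσ i hi)

lemma sum_permsOn_mul_left {M : Type*} [AddCommMonoid M] (hσ : σ ∈ permsOn n a)
    (f : Equiv.Perm (Fin n) → M) :
    ∑ τ ∈ permsOn n a, f (σ * τ) = ∑ τ ∈ permsOn n a, f τ :=
  sum_equiv (Equiv.mulLeft σ) (fun τ => ⟨mul_mem_permsOn hσ, fun h => by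
    simpa using mul_mem_permsOn (inv_mem_permsOn hσ) h⟩) fun _ _ => rfl

lemma sum_permsOn_mul_right {M : Type*} [AddCommMonoid M] (hσ : σ ∈ permsOn n a)
    (f : Equiv.Perm (Fin n) → M) :
    ∑ τ ∈ permsOn n a, f (τ * σ) = ∑ τ ∈ permsOn n a, f τ :=
  sum_equiv (Equiv.mulRight σ) (fun τ => ⟨(mul_mem_permsOn · hσ), fun h => by
    simpa using mul_mem_permsOn h (inv_mem_permsOn hσ)⟩) fun _ _ => rfl

/-- Every permutation of `insert p a` factors uniquely as `swap p i * τ` with `i = σ p` and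
`τ` a permutation of `a`. -/
lemma sum_permsOn_insert {M : Type*} [AddCommMonoid M] {p : Fin n} (hp : p ∉ a)
    (f : Equiv.Perm (Fin n) → M) :
    ∑ σ ∈ permsOn n (insert p a), f σ =
      ∑ i ∈ insert p a, ∑ τ ∈ permsOn n a, f (Equiv.swap p i * τ) := by
  rw [← sum_product']
  symm
  refine sum_nbij' (fun x => Equiv.swap p x.1 * x.2) (fun σ => (σ p, Equiv.swap p (σ p) * σ))
    ?_ ?_ ?_ ?_ fun _ _ => rfl
  · rintro ⟨i, τ⟩ h
    obtain ⟨hi, hτ⟩ := mem_product.1 h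
    exact mul_mem_permsOn (swap_mem_permsOn (mem_insert_self p a) hi)
      (permsOn_mono (subset_insert p a) hτ)
  · intro σ hσ
    have hσp : σ p ∈ insert p a := (apply_mem_iff_of_mem_permsOn hσ).2 (mem_insert_self p a)
    refine mem_product.2 ⟨hσp, mem_permsOn.2 fun i hi => ?_⟩
    by_cases hip : i = p
    · simp [hip]
    · have hi' : i ∉ insert p a := by simp [hip, hi]
      rw [Equiv.Perm.mul_apply, mem_permsOn.1 hσ i hi',
        Equiv.swap_apply_of_ne_of_ne hip fun h => hi' (h ▸ hσp)]
  · rintro ⟨i, τ⟩ h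
    have hτp : τ p = p := mem_permsOn.1 (mem_product.1 h).2 p hp
    simp [hτp, ← mul_assoc]
  · intro σ _
    simp [← mul_assoc]

end Perms

section Averages

variable {n : ℕ} {ε ε' : Equiv.Perm (Fin n) →* ℤˣ} {a b : Finset (Fin n)}
  {σ τ : Equiv.Perm (Fin n)} {v : TP F H n}

omit [CharZero F] in
lemma permMap_one : permMap F H n 1 = LinearMap.id := by
  rw [permMap, Equiv.Perm.one_def, PiTensorProduct.reindex_refl]
  rfl

omit [CharZero F] in
lemma permMap_mul_apply (v : TP F H n) :
    permMap F H n (σ * τ) v = permMap F H n σ (permMap F H n τ v) :=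
  (PiTensorProduct.reindex_reindex τ σ v).symm

omit [CharZero F] in
lemma avgOn_apply (v : TP F H n) :
    avgOn F H n ε a v =
      ((#a).factorial : F)⁻¹ • ∑ σ ∈ permsOn n a, (ε σ : ℤ) • permMap F H n σ v := by
  simp [avgOn, LinearMap.sum_apply]

omit [CharZero F] in
lemma symOn_eq_avgOn : symOn F H n a = avgOn F H n 1 a := by
  simp [symOn, avgOn]

omit [CharZero F] in
lemma altOn_eq_avgOn : altOn F H n a = avgOn F H n Equiv.Perm.sign a := rfl

omit [CharZero F] in
lemma permMap_avgOn (hσ : σ ∈ permsOn n a) (v : TP F H n) :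
    permMap F H n σ (avgOn F H n ε a v) = (ε σ : ℤ) • avgOn F H n ε a v := by
  rw [avgOn_apply, map_smul, map_sum, smul_comm (ε σ : ℤ), ← sum_zsmul,
    ← sum_permsOn_mul_left hσ fun τ => (ε σ : ℤ) • (ε τ : ℤ) • permMap F H n τ v]
  refine congrArg _ (sum_congr rfl fun τ _ => ?_)
  rw [map_zsmul, permMap_mul_apply, map_mul, Units.val_mul, mul_smul, units_zsmul_zsmul_self]

omit [CharZero F] in
lemma avgOn_permMap (hσ : σ ∈ permsOn n a) (v : TP F H n) :
    avgOn F H n ε a (permMap F H n σ v) = (ε σ : ℤ) • avgOn F H n ε a v := by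
  rw [avgOn_apply, avgOn_apply, smul_comm (ε σ : ℤ), ← sum_zsmul,
    ← sum_permsOn_mul_right hσ fun τ => (ε σ : ℤ) • (ε τ : ℤ) • permMap F H n τ v]
  refine congrArg _ (sum_congr rfl fun τ _ => ?_)
  rw [permMap_mul_apply, map_mul, Units.val_mul, mul_comm, mul_smul, units_zsmul_zsmul_self]

lemma avgOn_eq_self_iff :
    avgOn F H n ε a v = v ↔ ∀ σ ∈ permsOn n a, permMap F H n σ v = (ε σ : ℤ) • v := by
  refine ⟨fun h σ hσ => h ▸ permMap_avgOn hσ v, fun h => ?_⟩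
  rw [avgOn_apply, sum_congr rfl fun σ hσ => by rw [h σ hσ, units_zsmul_zsmul_self],
    sum_const, card_permsOn, ← Nat.cast_smul_eq_nsmul F, inv_smul_smul₀]
  exact Nat.cast_ne_zero.2 (Nat.factorial_ne_zero _)

lemma avgOn_eq_self_of_subset (hab : a ⊆ b) (hv : avgOn F H n ε b v = v) :
    avgOn F H n ε a v = v :=
  avgOn_eq_self_iff.2 fun σ hσ => avgOn_eq_self_iff.1 hv σ (permsOn_mono hab hσ)

lemma avgOn_avgOn_of_subset (hab : a ⊆ b) (v : TP F H n) :
    avgOn F H n ε b (avgOn F H n ε a v) = avgOn F H n ε b v := by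
  rw [avgOn_apply (a := a), map_smul, map_sum, sum_congr rfl fun σ hσ => by
      rw [map_zsmul, avgOn_permMap (permsOn_mono hab hσ), units_zsmul_zsmul_self],
    sum_const, card_permsOn, ← Nat.cast_smul_eq_nsmul F, inv_smul_smul₀]
  exact Nat.cast_ne_zero.2 (Nat.factorial_ne_zero _)

omit [CharZero F] in
lemma avgOn_comm (hd : Disjoint a b) :
    avgOn F H n ε a (avgOn F H n ε' b v) = avgOn F H n ε' b (avgOn F H n ε a v) := by
  rw [avgOn_apply (a := b), avgOn_apply (a := b), map_smul, map_sum]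
  congr 1
  refine sum_congr rfl fun τ hτ => ?_
  rw [map_zsmul, avgOn_apply, avgOn_apply, map_smul, map_sum]
  congr 2
  refine sum_congr rfl fun σ hσ => ?_
  rw [map_zsmul, ← permMap_mul_apply, ← permMap_mul_apply,
    (commute_of_mem_permsOn hd hσ hτ).eq]

lemma avgOn_of_card_le_one (ha : #a ≤ 1) (v : TP F H n) : avgOn F H n ε a v = v :=
  avgOn_eq_self_iff.2 fun σ hσ => by
    rw [eq_one_of_mem_permsOn ha hσ, permMap_one, map_one, Units.val_one, one_smul]
    rfl

lemma avgOn_insert {p : Fin n} (hp : p ∉ a) (hv : avgOn F H n ε a v = v) :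
    ((#a + 1 : ℕ) : F) • avgOn F H n ε (insert p a) v =
      v + ∑ i ∈ a, (ε (Equiv.swap p i) : ℤ) • permMap F H n (Equiv.swap p i) v := by
  have hterm : ∀ i, ∀ τ ∈ permsOn n a,
      (ε (Equiv.swap p i * τ) : ℤ) • permMap F H n (Equiv.swap p i * τ) v =
        (ε (Equiv.swap p i) : ℤ) • permMap F H n (Equiv.swap p i) v := fun i τ hτ => by
    rw [permMap_mul_apply, avgOn_eq_self_iff.1 hv τ hτ, map_zsmul, map_mul, Units.val_mul,
      mul_smul, units_zsmul_zsmul_self]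
  have hsum : ∑ σ ∈ permsOn n (insert p a), (ε σ : ℤ) • permMap F H n σ v =
      (#a).factorial •
        (v + ∑ i ∈ a, (ε (Equiv.swap p i) : ℤ) • permMap F H n (Equiv.swap p i) v) := by
    rw [sum_permsOn_insert hp, sum_congr rfl fun i _ => sum_congr rfl (hterm i), sum_insert hp]
    simp [card_permsOn, ← Equiv.Perm.one_def, permMap_one, nsmul_add, sum_nsmul]
  rw [avgOn_apply, hsum, card_insert_of_notMem hp, ← Nat.cast_smul_eq_nsmul F, smul_smul,
    smul_smul]
  convert one_smul F _
  have := (Nat.cast_ne_zero (R := F)).2 (Nat.factorial_ne_zero (#a))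
  push_cast [Nat.factorial_succ]
  field_simp

lemma altOn_eq_zero_of_swap {i j : Fin n} (hij : i ≠ j) (hi : i ∈ a) (hj : j ∈ a)
    (h : permMap F H n (Equiv.swap i j) v = v) : altOn F H n a v = 0 := by
  have hneg := avgOn_permMap (ε := Equiv.Perm.sign) (swap_mem_permsOn hi hj) v
  rw [h, Equiv.Perm.sign_swap hij, Units.val_neg, Units.val_one, neg_one_zsmul] at hneg
  have := IsAddTorsionFree.of_isTorsionFree F (TP F H n)
  exact self_eq_neg.1 hneg

end Averages

section Homotopy

variable {n : ℕ} {ε : Equiv.Perm (Fin n) →* ℤˣ} {s t a b : Finset (Fin n)} {v : TP F H n}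

/-- The cross sum of transpositions between `s` and `t` is again `ε`-equivariant for
permutations of `s`, which lets one move every transposition to a fixed base point `p`. -/
lemma sum_sum_permMap_swap (hst : Disjoint s t) {p : Fin n} (hp : p ∈ s)
    (hv : avgOn F H n ε s v = v) :
    ∑ j ∈ s, ∑ i ∈ t, permMap F H n (Equiv.swap j i) v =
      #s • ∑ i ∈ t, avgOn F H n ε s (permMap F H n (Equiv.swap p i) v) := by
  have hconj : ∀ σ ∈ permsOn n s, ∀ j, ∀ i ∈ t,
      permMap F H n σ (permMap F H n (Equiv.swap j i) v) =
        (ε σ : ℤ) • permMap F H n (Equiv.swap (σ j) i) v := fun σ hσ j i hi => by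
    rw [← permMap_mul_apply, Equiv.mul_swap_eq_swap_mul,
      mem_permsOn.1 hσ i (disjoint_right.1 hst hi), permMap_mul_apply,
      avgOn_eq_self_iff.1 hv σ hσ, map_zsmul]
  have hinv : avgOn F H n ε s (∑ j ∈ s, ∑ i ∈ t, permMap F H n (Equiv.swap j i) v) =
      ∑ j ∈ s, ∑ i ∈ t, permMap F H n (Equiv.swap j i) v := by
    refine avgOn_eq_self_iff.2 fun σ hσ => ?_
    rw [map_sum, ← sum_zsmul]
    refine sum_equiv σ (fun j => (apply_mem_iff_of_mem_permsOn hσ).symm) fun j _ => ?_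
    rw [map_sum, ← sum_zsmul]
    exact sum_congr rfl fun i hi => hconj σ hσ j i hi
  have hbase : ∀ j ∈ s, ∀ i ∈ t, avgOn F H n ε s (permMap F H n (Equiv.swap j i) v) =
      avgOn F H n ε s (permMap F H n (Equiv.swap p i) v) := fun j hj i hi => by
    have hσ := swap_mem_permsOn hp hj
    have h := hconj _ hσ p i hi
    rw [Equiv.swap_apply_left] at h
    rw [← units_zsmul_zsmul_self (ε (Equiv.swap p j)) (permMap F H n (Equiv.swap j i) v), ← h,
      map_zsmul, avgOn_permMap hσ, units_zsmul_zsmul_self]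
  rw [← hinv]
  simp only [map_sum]
  rw [sum_congr rfl fun j hj => sum_congr rfl fun i hi => hbase j hj i hi, sum_const]

lemma mem_Hgen_iff :
    v ∈ Hgen F H n a ↔ symOn F H n a v = v ∧ altOn F H n aᶜ v = v := by
  refine ⟨?_, fun ⟨hS, hA⟩ => ⟨v, by rw [LinearMap.comp_apply, hA, hS]⟩⟩
  rintro ⟨x, rfl⟩
  simp only [LinearMap.comp_apply, symOn_eq_avgOn, altOn_eq_avgOn]
  refine ⟨avgOn_avgOn_of_subset subset_rfl _, ?_⟩
  rw [avgOn_comm disjoint_compl_right, avgOn_avgOn_of_subset subset_rfl]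

lemma symOn_mem_Hgen (hab : a ⊆ b) (hv : v ∈ Hgen F H n a) : symOn F H n b v ∈ Hgen F H n b := by
  have hA := (mem_Hgen_iff.1 hv).2
  rw [altOn_eq_avgOn] at hA
  rw [mem_Hgen_iff, symOn_eq_avgOn, altOn_eq_avgOn]
  refine ⟨avgOn_avgOn_of_subset subset_rfl _, ?_⟩
  rw [← avgOn_comm disjoint_compl_right, avgOn_eq_self_of_subset (compl_subset_compl.2 hab) hA]

lemma altOn_insert {p : Fin n} (hp : p ∉ a) (hv : altOn F H n a v = v) :
    ((#a + 1 : ℕ) : F) • altOn F H n (insert p a) v =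
      v - ∑ i ∈ a, permMap F H n (Equiv.swap p i) v := by
  rw [altOn_eq_avgOn] at *
  rw [avgOn_insert hp hv, sub_eq_add_neg, ← sum_neg_distrib]
  refine congrArg _ (sum_congr rfl fun i hi => ?_)
  rw [Equiv.Perm.sign_swap (ne_of_mem_of_not_mem hi hp).symm, Units.val_neg, Units.val_one,
    neg_one_zsmul]

lemma symOn_insert {p : Fin n} (hp : p ∉ a) (hv : symOn F H n a v = v) :
    ((#a + 1 : ℕ) : F) • symOn F H n (insert p a) v =
      v + ∑ i ∈ a, permMap F H n (Equiv.swap p i) v := by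
  rw [symOn_eq_avgOn] at *
  rw [avgOn_insert hp hv]
  simp

/-- `d̆* d̆ + d̆ d̆* = n` on `H^{⊙a,∧aᶜ}`: `p₁` is the slot that `d̆` adds to the skew block,
`p₂` the slot that `d̆*` adds to the symmetric block. -/
theorem card_smul_symOn_altOn_insert_add (hv : v ∈ Hgen F H n a) {p₁ p₂ : Fin n}
    (hp₁ : p₁ ∈ a) (hp₂ : p₂ ∉ a) :
    (#a : F) • symOn F H n a (((#aᶜ + 1 : ℕ) : F) • altOn F H n (insert p₁ aᶜ) v) +
      (#aᶜ : F) • altOn F H n aᶜ (((#a + 1 : ℕ) : F) • symOn F H n (insert p₂ a) v) =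
        (n : F) • v := by
  obtain ⟨hS, hA⟩ := mem_Hgen_iff.1 hv
  rw [altOn_insert (notMem_compl.2 hp₁) hA, symOn_insert hp₂ hS, map_sub, map_add, map_sum,
    map_sum, hS, hA]
  have hX₁ := sum_sum_permMap_swap disjoint_compl_right hp₁ (by rwa [symOn_eq_avgOn] at hS)
  have hX₂ := sum_sum_permMap_swap disjoint_compl_left (mem_compl.2 hp₂) hA
  have hX : ∑ j ∈ a, ∑ i ∈ aᶜ, permMap F H n (Equiv.swap j i) v =
      ∑ j ∈ aᶜ, ∑ i ∈ a, permMap F H n (Equiv.swap j i) v := by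
    rw [sum_comm]
    exact sum_congr rfl fun _ _ => sum_congr rfl fun _ _ => by rw [Equiv.swap_comm]
  rw [hX₁, hX₂, ← symOn_eq_avgOn, ← altOn_eq_avgOn, ← Nat.cast_smul_eq_nsmul F,
    ← Nat.cast_smul_eq_nsmul F] at hX
  have hn : (n : F) = #a + #aᶜ := by
    rw [← Nat.cast_add, card_add_card_compl, Fintype.card_fin]
  rw [hn]
  linear_combination (norm := module) -hX

end Homotopy

section Positions

variable {n k l q : ℕ}

lemma card_firstSet : #(firstSet n k) = min n k := Fin.card_filter_val_lt

lemma card_compl_firstSet (hkq : k + q = n) : #(firstSet n k)ᶜ = q := by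
  rw [card_compl, card_firstSet, Fintype.card_fin]
  omega

lemma lastSet_eq_compl_firstSet (hkq : k + q = n) : lastSet n q = (firstSet n k)ᶜ := by
  ext i
  simp only [lastSet, firstSet, mem_filter, mem_univ, true_and, mem_compl]
  omega

lemma firstSet_mono (h : k ≤ l) : firstSet n k ⊆ firstSet n l := by
  intro i
  simp only [firstSet, mem_filter, mem_univ, true_and]
  omega

lemma lastSet_mono (h : q ≤ l) : lastSet n q ⊆ lastSet n l := by
  intro i
  simp only [lastSet, mem_filter, mem_univ, true_and]
  omega

lemma firstSet_succ (hk : k < n) : firstSet n (k + 1) = insert ⟨k, hk⟩ (firstSet n k) := by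
  ext i
  simp only [firstSet, mem_insert, mem_filter, mem_univ, true_and, Fin.ext_iff]
  omega

lemma lastSet_succ (hkq : k + q = n) (hk : 0 < k) :
    lastSet n (q + 1) = insert ⟨k - 1, by omega⟩ (firstSet n k)ᶜ := by
  ext i
  simp only [lastSet, firstSet, mem_insert, mem_filter, mem_univ, true_and, mem_compl,
    Fin.ext_iff]
  omega

end Positions

section Complex

variable {n k q : ℕ} {u v : TP F H n}

omit [CharZero F] in
lemma dOp_zero : dOp F H n 0 = 0 := by
  simp [dOp]

omit [CharZero F] in
lemma dStarOp_zero : dStarOp F H n 0 = 0 := by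
  simp [dStarOp]

lemma dStarOp_mem_Hmix (hv : v ∈ Hmix F H n k) :
    dStarOp F H n (k + 1) v ∈ Hmix F H n (k + 1) :=
  Submodule.smul_mem _ _ (symOn_mem_Hgen (firstSet_mono k.le_succ) hv)

lemma dOp_dOp_eq_zero (hkq : k + q = n) (hk : 0 < k) (hq : 0 < q)
    (hu : u ∈ Hmix F H n (k + 1)) : dOp F H n (q + 1) (dOp F H n q u) = 0 := by
  have hS := (mem_Hgen_iff.1 hu).1
  rw [symOn_eq_avgOn, avgOn_eq_self_iff] at hS
  have hi : (⟨k - 1, by omega⟩ : Fin n) ∈ firstSet n (k + 1) ∩ lastSet n (q + 1) := by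
    simp only [firstSet, lastSet, mem_inter, mem_filter, mem_univ, true_and]
    omega
  have hj : (⟨k, by omega⟩ : Fin n) ∈ firstSet n (k + 1) ∩ lastSet n (q + 1) := by
    simp only [firstSet, lastSet, mem_inter, mem_filter, mem_univ, true_and]
    omega
  have hswap := hS _ (swap_mem_permsOn (mem_inter.1 hi).1 (mem_inter.1 hj).1)
  rw [MonoidHom.one_apply, Units.val_one, one_smul] at hswap
  simp only [dOp, LinearMap.smul_apply, map_smul]
  rw [altOn_eq_avgOn, altOn_eq_avgOn, avgOn_avgOn_of_subset (lastSet_mono q.le_succ),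
    ← altOn_eq_avgOn, altOn_eq_zero_of_swap (by simp [Fin.ext_iff]; omega) (mem_inter.1 hi).2
      (mem_inter.1 hj).2 hswap, smul_zero, smul_zero]

theorem dStarOp_dOp_add_dOp_dStarOp (hkq : k + q = n) (hv : v ∈ Hmix F H n k) :
    dStarOp F H n k (dOp F H n (q + 1) v) + dOp F H n q (dStarOp F H n (k + 1) v) =
      (n : F) • v := by
  obtain ⟨hS, hA⟩ := mem_Hgen_iff.1 hv
  rcases Nat.eq_zero_or_pos k with rfl | hk
  · rw [zero_add] at hkq
    subst hkq
    have hS₁ : symOn F H q (firstSet q 1) v = v := by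
      rw [symOn_eq_avgOn, avgOn_of_card_le_one (card_firstSet ▸ min_le_right q 1)]
    simp only [dOp, dStarOp, LinearMap.smul_apply, Nat.cast_zero, zero_smul,
      LinearMap.zero_apply, zero_add, Nat.cast_one, one_smul, hS₁,
      lastSet_eq_compl_firstSet (zero_add q), hA]
  rcases Nat.eq_zero_or_pos q with rfl | hq
  · rw [add_zero] at hkq
    subst hkq
    have hA₁ : altOn F H k (lastSet k 1) v = v := by
      rw [altOn_eq_avgOn, avgOn_of_card_le_one]
      rw [lastSet_eq_compl_firstSet (k := k - 1) (q := 1) (by omega),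
        card_compl_firstSet (k := k - 1) (q := 1) (by omega)]
    simp only [dOp, dStarOp, LinearMap.smul_apply, Nat.cast_zero, zero_smul,
      LinearMap.zero_apply, add_zero, zero_add, Nat.cast_one, one_smul, hA₁, hS]
  have key := card_smul_symOn_altOn_insert_add hv
    (p₁ := ⟨k - 1, by omega⟩) (p₂ := ⟨k, by omega⟩)
    (by simp only [firstSet, mem_filter, mem_univ, true_and]; omega)
    (by simp [firstSet])
  rw [card_firstSet, card_compl_firstSet hkq, min_eq_right (by omega)] at key
  simp only [dOp, dStarOp, LinearMap.smul_apply]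
  rwa [lastSet_succ hkq hk, firstSet_succ (by omega), lastSet_eq_compl_firstSet hkq]

lemma exists_dOp_eq_of_dStarOp_dOp_eq_zero (hn : n ≠ 0) (hkq : k + q = n)
    (hv : v ∈ Hmix F H n k) (h : dStarOp F H n k (dOp F H n (q + 1) v) = 0) :
    ∃ u ∈ Hmix F H n (k + 1), dOp F H n q u = v := by
  have key := dStarOp_dOp_add_dOp_dStarOp hkq hv
  rw [h, zero_add] at key
  refine ⟨(n : F)⁻¹ • dStarOp F H n (k + 1) v, Submodule.smul_mem _ _ (dStarOp_mem_Hmix hv), ?_⟩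
  rw [map_smul, key, inv_smul_smul₀ (Nat.cast_ne_zero.2 hn)]

end Complex

/-- Rawnsley; exactness of the d̆-sequence: the sequence
`0 → H^{⊙n} = H_{n,0} →^{d̆_0} H_{n-1,1} →^{d̆_1} ⋯ →^{d̆_{n-1}} H_{0,n} = H^{∧n} → 0`
is exact: `d̆_0` is injective, `d̆_{n-1}` is surjective, and for `1 ≤ q ≤ n-1`,
`ker(d̆_q : H_{n-q,q} → H_{n-q-1,q+1}) = im(d̆_{q-1} : H_{n-q+1,q-1} → H_{n-q,q})`. -/
theorem dOp_sequence_exact (n : ℕ) (hn : 1 ≤ n) :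
    (∀ v ∈ Hmix F H n n, dOp F H n 1 v = 0 → v = 0) ∧
    (∀ w ∈ Hmix F H n 0, ∃ v ∈ Hmix F H n 1, dOp F H n n v = w) ∧
    (∀ q : ℕ, 1 ≤ q → q ≤ n - 1 → ∀ v ∈ Hmix F H n (n - q),
      (dOp F H n (q + 1) v = 0 ↔ ∃ u ∈ Hmix F H n (n - q + 1), dOp F H n q u = v)) := by
  have hn₀ : n ≠ 0 := Nat.one_le_iff_ne_zero.1 hn
  refine ⟨fun v hv hdv => ?_, fun w hw => ?_, fun q hq hqn v hv => ⟨fun hdv => ?_, ?_⟩⟩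
  · have key := dStarOp_dOp_add_dOp_dStarOp (add_zero n) hv
    rw [hdv, map_zero, dOp_zero, LinearMap.zero_apply, add_zero, eq_comm, smul_eq_zero] at key
    exact key.resolve_left (Nat.cast_ne_zero.2 hn₀)
  · exact exists_dOp_eq_of_dStarOp_dOp_eq_zero hn₀ (zero_add n) hw
      (by rw [dStarOp_zero, LinearMap.zero_apply])
  · exact exists_dOp_eq_of_dStarOp_dOp_eq_zero hn₀ (Nat.sub_add_cancel (by omega)) hv
      (by rw [hdv, map_zero])
  · rintro ⟨u, hu, rfl⟩
    exact dOp_dOp_eq_zero (Nat.sub_add_cancel (by omega)) (by omega) hq hu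
end
end

section
/- H_{k,q}^+ is contained in the kernel of d̆_q, and H_{k,q}^− is contained in the kernel of d̆*_{q−1}: every element of H_{k,q} that is symmetric in some k+1 of its components (and skew-symmetric in the rest) is annihilated by the skew-symmetrization operator d̆_q, and every element of H_{k,q} that is skew-symmetric in some q+1 of its components (and symmetric in the rest) is annihilated by the symmetrization operator d̆*_{q−1}. -/
open scoped BigOperators

noncomputable section

variable (F : Type*) [Field F] [CharZero F] (H : Type*) [AddCommGroup H] [Module F H]

/-! An element of `H^{⊙a,∧aᶜ}` is fixed by every transposition of two positions of `a` and
negated by every transposition of two positions of `aᶜ`. If `#a = k + 1`, then `a` and the last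
`q + 1` positions share two positions `i ≠ j`, since `(k + 1) + (q + 1) > n`; skew-symmetrisation
over the last `q + 1` positions turns the transposition `(i j)` into a sign `-1`, so it sends the
element to its own negative, hence to `0`. Dually, if `#aᶜ = q + 1`, then `aᶜ` meets the first
`k + 1` positions in two positions, and symmetrisation over these kills the element. -/

open Finset

namespace permsOn

variable {n : ℕ} {a : Finset (Fin n)} {σ π : Equiv.Perm (Fin n)}

lemma mem_iff : σ ∈ permsOn n a ↔ ∀ i, i ∉ a → σ i = i := by simp [permsOn]

lemma mul_mem (hσ : σ ∈ permsOn n a) (hπ : π ∈ permsOn n a) : σ * π ∈ permsOn n a :=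
  mem_iff.2 fun i hi => by rw [Equiv.Perm.mul_apply, mem_iff.1 hπ i hi, mem_iff.1 hσ i hi]

lemma inv_mem (hσ : σ ∈ permsOn n a) : σ⁻¹ ∈ permsOn n a :=
  mem_iff.2 fun i hi => by rw [Equiv.Perm.inv_eq_iff_eq, mem_iff.1 hσ i hi]

lemma swap_mem {i j : Fin n} (hi : i ∈ a) (hj : j ∈ a) : Equiv.swap i j ∈ permsOn n a :=
  mem_iff.2 fun _ hl => Equiv.swap_apply_of_ne_of_ne (by rintro rfl; exact hl hi)
    (by rintro rfl; exact hl hj)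

lemma apply_mem (hσ : σ ∈ permsOn n a) {i : Fin n} (hi : i ∈ a) : σ i ∈ a := by
  by_contra h
  exact h (by rwa [σ.injective (mem_iff.1 hσ _ h)])

lemma commute_of_mem_compl (hσ : σ ∈ permsOn n a) (hπ : π ∈ permsOn n aᶜ) : Commute σ π := by
  ext i
  by_cases hi : i ∈ a
  · have hπi : π i = i := mem_iff.1 hπ i (by simpa using hi)
    have hπσi : π (σ i) = σ i := mem_iff.1 hπ _ (by simpa using apply_mem hσ hi)
    simp [Equiv.Perm.mul_apply, hπi, hπσi]
  · have hσi : σ i = i := mem_iff.1 hσ i hi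
    have hσπi : σ (π i) = π i := mem_iff.1 hσ _ (by simpa using apply_mem hπ (by simpa using hi))
    simp [Equiv.Perm.mul_apply, hσi, hσπi]

lemma sum_comp_mul_left {M : Type*} [AddCommMonoid M] (hπ : π ∈ permsOn n a)
    (f : Equiv.Perm (Fin n) → M) : ∑ σ ∈ permsOn n a, f (π * σ) = ∑ σ ∈ permsOn n a, f σ :=
  sum_nbij' (π * ·) (π⁻¹ * ·) (fun _ hσ => mul_mem hπ hσ) (fun _ hσ => mul_mem (inv_mem hπ) hσ)
    (fun _ _ => inv_mul_cancel_left _ _) (fun _ _ => mul_inv_cancel_left _ _) fun _ _ => rfl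

lemma sum_comp_mul_right {M : Type*} [AddCommMonoid M] (hπ : π ∈ permsOn n a)
    (f : Equiv.Perm (Fin n) → M) : ∑ σ ∈ permsOn n a, f (σ * π) = ∑ σ ∈ permsOn n a, f σ :=
  sum_nbij' (· * π) (· * π⁻¹) (fun _ hσ => mul_mem hσ hπ) (fun _ hσ => mul_mem hσ (inv_mem hπ))
    (fun _ _ => mul_inv_cancel_right _ _) (fun _ _ => inv_mul_cancel_right _ _) fun _ _ => rfl

end permsOn

lemma exists_ne_mem_inter_of_add_card_le {n : ℕ} {a b : Finset (Fin n)}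
    (h : n + 2 ≤ #a + #b) : ∃ i ∈ a ∩ b, ∃ j ∈ a ∩ b, i ≠ j := by
  have hunion : #(a ∪ b) ≤ n := by simpa using card_le_univ (a ∪ b)
  have hinter := card_inter_add_card_union a b
  exact one_lt_card.1 (by omega)

lemma card_firstSet_s11 {n m : ℕ} (h : m ≤ n) : #(firstSet n m) = m := by
  rw [firstSet, Fin.card_filter_val_lt, min_eq_right h]

lemma lastSet_eq_compl_firstSet_s11 (n m : ℕ) : lastSet n m = (firstSet n (n - m))ᶜ := by
  ext
  simp [lastSet, firstSet]

lemma card_lastSet {n m : ℕ} (h : m ≤ n) : #(lastSet n m) = m := by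
  rw [lastSet_eq_compl_firstSet_s11, card_compl, card_firstSet_s11 (Nat.sub_le n m), Fintype.card_fin]
  omega

section

variable {K : Type*} [Field K] {V : Type*} [AddCommGroup V] [Module K V] {n : ℕ}
  {a : Finset (Fin n)} {π : Equiv.Perm (Fin n)}

lemma permMap_mul (σ π : Equiv.Perm (Fin n)) :
    permMap K V n (σ * π) = permMap K V n σ * permMap K V n π :=
  LinearMap.ext fun x => (PiTensorProduct.reindex_reindex π σ x).symm

lemma symOn_mul_permMap (hπ : π ∈ permsOn n a) :
    symOn K V n a * permMap K V n π = symOn K V n a := by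
  rw [symOn, smul_mul_assoc, sum_mul]
  simp only [← permMap_mul]
  rw [permsOn.sum_comp_mul_right hπ (permMap K V n)]

lemma permMap_mul_symOn (hπ : π ∈ permsOn n a) :
    permMap K V n π * symOn K V n a = symOn K V n a := by
  rw [symOn, mul_smul_comm, mul_sum]
  simp only [← permMap_mul]
  rw [permsOn.sum_comp_mul_left hπ (permMap K V n)]

lemma altOn_eq_sum (a : Finset (Fin n)) :
    altOn K V n a = ((#a).factorial : K)⁻¹ •
      ∑ σ ∈ permsOn n a, ((Equiv.Perm.sign σ : ℤ) : K) • permMap K V n σ := by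
  simp only [altOn, ← Int.cast_smul_eq_zsmul K]

lemma altOn_mul_permMap (hπ : π ∈ permsOn n a) :
    altOn K V n a * permMap K V n π = (Equiv.Perm.sign π : ℤ) • altOn K V n a := by
  have hf (σ : Equiv.Perm (Fin n)) :
      ((Equiv.Perm.sign σ : ℤ) : K) • permMap K V n σ * permMap K V n π =
        ((Equiv.Perm.sign π : ℤ) : K) •
          ((Equiv.Perm.sign (σ * π) : ℤ) : K) • permMap K V n (σ * π) := by
    have hsign : Equiv.Perm.sign σ = Equiv.Perm.sign π * Equiv.Perm.sign (σ * π) := by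
      rw [map_mul, mul_left_comm, Int.units_mul_self, mul_one]
    rw [smul_mul_assoc, ← permMap_mul, smul_smul, hsign, Units.val_mul, Int.cast_mul]
  rw [altOn_eq_sum, ← Int.cast_smul_eq_zsmul K, smul_mul_assoc, sum_mul]
  simp only [hf, ← Finset.smul_sum]
  rw [permsOn.sum_comp_mul_right hπ fun σ => ((Equiv.Perm.sign σ : ℤ) : K) • permMap K V n σ,
    smul_comm]

lemma permMap_mul_altOn (hπ : π ∈ permsOn n a) :
    permMap K V n π * altOn K V n a = (Equiv.Perm.sign π : ℤ) • altOn K V n a := by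
  have hf (σ : Equiv.Perm (Fin n)) :
      permMap K V n π * ((Equiv.Perm.sign σ : ℤ) : K) • permMap K V n σ =
        ((Equiv.Perm.sign π : ℤ) : K) •
          ((Equiv.Perm.sign (π * σ) : ℤ) : K) • permMap K V n (π * σ) := by
    have hsign : Equiv.Perm.sign σ = Equiv.Perm.sign π * Equiv.Perm.sign (π * σ) := by
      rw [map_mul, ← mul_assoc, Int.units_mul_self, one_mul]
    rw [mul_smul_comm, ← permMap_mul, smul_smul, hsign, Units.val_mul, Int.cast_mul]
  rw [altOn_eq_sum, ← Int.cast_smul_eq_zsmul K, mul_smul_comm, mul_sum]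
  simp only [hf, ← Finset.smul_sum]
  rw [permsOn.sum_comp_mul_left hπ fun σ => ((Equiv.Perm.sign σ : ℤ) : K) • permMap K V n σ,
    smul_comm]

lemma permMap_mul_symOn_of_mem_compl (hπ : π ∈ permsOn n aᶜ) :
    permMap K V n π * symOn K V n a = symOn K V n a * permMap K V n π := by
  rw [symOn, mul_smul_comm, smul_mul_assoc, mul_sum, sum_mul]
  congr 1
  exact sum_congr rfl fun σ hσ => by
    rw [← permMap_mul, ← permMap_mul, (permsOn.commute_of_mem_compl hσ hπ).eq]

variable {x : TP K V n}

lemma permMap_apply_of_mem_Hgen (hπ : π ∈ permsOn n a) (hx : x ∈ Hgen K V n a) :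
    permMap K V n π x = x := by
  obtain ⟨y, rfl⟩ := hx
  exact LinearMap.congr_fun (permMap_mul_symOn hπ) _

lemma permMap_apply_of_mem_Hgen_of_mem_compl (hπ : π ∈ permsOn n aᶜ) (hx : x ∈ Hgen K V n a) :
    permMap K V n π x = (Equiv.Perm.sign π : ℤ) • x := by
  obtain ⟨y, rfl⟩ := hx
  calc permMap K V n π (symOn K V n a (altOn K V n aᶜ y))
      = symOn K V n a ((permMap K V n π * altOn K V n aᶜ) y) :=
        LinearMap.congr_fun (permMap_mul_symOn_of_mem_compl hπ) _
    _ = _ := by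
        rw [permMap_mul_altOn hπ, ← Int.cast_smul_eq_zsmul K, LinearMap.smul_apply, map_smul,
          Int.cast_smul_eq_zsmul, LinearMap.comp_apply]

variable [CharZero K]

lemma eq_zero_of_self_eq_neg {M : Type*} [AddCommGroup M] [Module K M] {v : M}
    (h : v = -v) : v = 0 := by
  have h2 : (2 : K) • v = 0 := by rw [two_smul]; nth_rewrite 2 [h]; exact add_neg_cancel v
  exact (smul_eq_zero.1 h2).resolve_left two_ne_zero

lemma altOn_apply_eq_zero_of_sign_eq_neg_one {L : Finset (Fin n)} (hπ : π ∈ permsOn n L)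
    (hsign : Equiv.Perm.sign π = -1) (hx : permMap K V n π x = x) : altOn K V n L x = 0 := by
  refine eq_zero_of_self_eq_neg (K := K) ?_
  calc altOn K V n L x = (altOn K V n L * permMap K V n π) x := by rw [Module.End.mul_apply, hx]
    _ = -altOn K V n L x := by rw [altOn_mul_permMap hπ, hsign]; simp

lemma symOn_apply_eq_zero_of_permMap_eq_neg {L : Finset (Fin n)} (hπ : π ∈ permsOn n L)
    (hx : permMap K V n π x = -x) : symOn K V n L x = 0 := by
  refine eq_zero_of_self_eq_neg (K := K) ?_
  calc symOn K V n L x = (symOn K V n L * permMap K V n π) x := by rw [symOn_mul_permMap hπ]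
    _ = -symOn K V n L x := by rw [Module.End.mul_apply, hx, map_neg]

lemma altOn_apply_eq_zero_of_mem_Hgen {L : Finset (Fin n)} (h : n + 2 ≤ #a + #L)
    (hx : x ∈ Hgen K V n a) : altOn K V n L x = 0 := by
  obtain ⟨i, hi, j, hj, hij⟩ := exists_ne_mem_inter_of_add_card_le h
  rw [mem_inter] at hi hj
  exact altOn_apply_eq_zero_of_sign_eq_neg_one (permsOn.swap_mem hi.2 hj.2)
    (Equiv.Perm.sign_swap hij) (permMap_apply_of_mem_Hgen (permsOn.swap_mem hi.1 hj.1) hx)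

lemma symOn_apply_eq_zero_of_mem_Hgen {L : Finset (Fin n)} (h : n + 2 ≤ #aᶜ + #L)
    (hx : x ∈ Hgen K V n a) : symOn K V n L x = 0 := by
  obtain ⟨i, hi, j, hj, hij⟩ := exists_ne_mem_inter_of_add_card_le h
  rw [mem_inter] at hi hj
  refine symOn_apply_eq_zero_of_permMap_eq_neg (permsOn.swap_mem hi.2 hj.2) ?_
  rw [permMap_apply_of_mem_Hgen_of_mem_compl (permsOn.swap_mem hi.1 hj.1) hx,
    Equiv.Perm.sign_swap hij]
  simp

lemma HmixSpan_le_ker_altOn {k : ℕ} {L : Finset (Fin n)} (h : n + 2 ≤ k + #L) :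
    HmixSpan K V n k ≤ LinearMap.ker (altOn K V n L) :=
  iSup₂_le fun a ha _ hx => altOn_apply_eq_zero_of_mem_Hgen (by rwa [ha]) hx

lemma HmixSpan_le_ker_symOn {k : ℕ} {L : Finset (Fin n)} (hk : k ≤ n) (h : k + 2 ≤ #L) :
    HmixSpan K V n k ≤ LinearMap.ker (symOn K V n L) :=
  iSup₂_le fun a ha _ hx => symOn_apply_eq_zero_of_mem_Hgen
    (by rw [card_compl, Fintype.card_fin, ha]; omega) hx

end

/-- `H_{k,q}^+ ⊆ ker(d̆_q)` and `H_{k,q}^- ⊆ ker(d̆*_{q-1})`: every element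
of `H_{k,q}` symmetric in some `k+1` components (skew-symmetric in the rest) is annihilated
by `d̆_q = (q+1)·(id ⊗ A_{{k,…,n}})`, and every element of `H_{k,q}` skew-symmetric in some
`q+1` components (symmetric in the rest) is annihilated by
`d̆*_{q-1} = (k+1)·(S_{{1,…,k+1}} ⊗ id)`. -/
theorem plus_le_ker_dOp_and_minus_le_ker_dStarOp (k q : ℕ) (hk : 1 ≤ k) (hq : 1 ≤ q) :
    Hmix F H (k + q) k ⊓ HmixSpan F H (k + q) (k + 1) ≤
      LinearMap.ker (dOp F H (k + q) (q + 1)) ∧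
    Hmix F H (k + q) k ⊓ HmixSpan F H (k + q) (k - 1) ≤
      LinearMap.ker (dStarOp F H (k + q) (k + 1)) := by
  have hlast : #(lastSet (k + q) (q + 1)) = q + 1 := card_lastSet (by omega)
  have hfirst : #(firstSet (k + q) (k + 1)) = k + 1 := card_firstSet_s11 (by omega)
  rw [dOp, dStarOp, LinearMap.ker_smul _ _ (Nat.cast_ne_zero.2 q.succ_ne_zero),
    LinearMap.ker_smul _ _ (Nat.cast_ne_zero.2 k.succ_ne_zero)]
  exact ⟨inf_le_right.trans (HmixSpan_le_ker_altOn (by omega)),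
    inf_le_right.trans (HmixSpan_le_ker_symOn (by omega) (by omega))⟩

end
end
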